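/- The q-Fibonacci polynomials satisfy the recurrence F_n(x,s,q) = x·F_{n-1}(x,qs,q) + qs·F_{n-2}(x,qs,q) for all n ≥ 2. -/

import Mathlib

open Finset

noncomputable section

abbrev K : Type := RatFunc ℚ

def q : K := RatFunc.X

def qint (a : K) (m : ℕ) : K := ∑ i ∈ range m, a ^ i

def qfact (a : K) (m : ℕ) : K := ∏ i ∈ range m, qint a (i + 1)

def qbinom (a : K) (n k : ℕ) : K :=
  if k ≤ n then qfact a n / (qfact a k * qfact a (n - k)) else 0

/-- q-Fibonacci polynomials F_n(x,s,q) with base `a`. -/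
def qF (a x s : K) : ℕ → K
  | 0 => 0
  | n + 1 => ∑ k ∈ range (n / 2 + 1),
      a ^ (k * (k + 1) / 2) * qbinom a (n - k) k * s ^ k * x ^ (n - 2 * k)

/-- q-Lucas polynomials L_n(x,s,q) with base `a` (L_0 = 2). -/
def qL (a x s : K) (n : ℕ) : K :=
  if n = 0 then 2 else
  ∑ k ∈ range (n / 2 + 1),
    a ^ (k * (k - 1) / 2) * (qint a n / qint a (n - k)) * qbinom a (n - k) k
      * s ^ k * x ^ (n - 2 * k)

/-- Starred variant: L*_0 = 1, L*_n = L_n for n > 0. -/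
def qLs (a x s : K) (n : ℕ) : K := if n = 0 then 1 else qL a x s n

/-- Rogers-Szegő polynomial. -/
def rs (a x y : K) (m : ℕ) : K := ∑ j ∈ range (m + 1), qbinom a m j * x ^ j * y ^ (m - j)

/-- q-Pochhammer (q;q)_m. -/
def qpoch (a : K) (m : ℕ) : K := ∏ j ∈ range m, (1 - a ^ (j + 1))

/-! The q-Pascal rule `[N+1, k+1] = q^(k+1) [N, k+1] + [N, k]` splits the `k`-th summand of
`F_n(x, s)` into the `k`-th summand of `x F_(n-1)(x, qs)` and the `(k-1)`-st summand of
`qs F_(n-2)(x, qs)`: the extra powers of `q` are absorbed by `s ↦ qs` and by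
`C(k+2, 2) = C(k+1, 2) + k + 1`. -/

section QAnalogues

variable {a : K}

lemma qint_add (m n : ℕ) : qint a (m + n) = qint a m + a ^ m * qint a n := by
  simp only [qint, sum_range_add, mul_sum, pow_add]

lemma qfact_zero : qfact a 0 = 1 :=
  prod_range_zero _

lemma qfact_succ (m : ℕ) : qfact a (m + 1) = qfact a m * qint a (m + 1) :=
  prod_range_succ _ _

lemma qfact_ne_zero (ha : ∀ m, qint a (m + 1) ≠ 0) (m : ℕ) : qfact a m ≠ 0 :=
  prod_ne_zero_iff.2 fun i _ => ha i

lemma qbinom_eq_zero_of_lt {n k : ℕ} (h : n < k) : qbinom a n k = 0 :=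
  if_neg (by omega)

lemma qbinom_add_left (k d : ℕ) :
    qbinom a (k + d) k = qfact a (k + d) / (qfact a k * qfact a d) := by
  rw [qbinom, if_pos (Nat.le_add_right k d), Nat.add_sub_cancel_left]

variable (ha : ∀ m, qint a (m + 1) ≠ 0)
include ha

lemma qbinom_zero_right (n : ℕ) : qbinom a n 0 = 1 := by
  rw [qbinom, if_pos n.zero_le, Nat.sub_zero, qfact_zero, one_mul, div_self (qfact_ne_zero ha n)]

lemma qbinom_self (n : ℕ) : qbinom a n n = 1 := by
  rw [qbinom, if_pos le_rfl, Nat.sub_self, qfact_zero, mul_one, div_self (qfact_ne_zero ha n)]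

lemma qbinom_succ_succ (n k : ℕ) :
    qbinom a (n + 1) (k + 1) = a ^ (k + 1) * qbinom a n (k + 1) + qbinom a n k := by
  rcases lt_trichotomy n k with hlt | rfl | hgt
  · simp only [qbinom_eq_zero_of_lt (a := a) (by omega : n + 1 < k + 1),
      qbinom_eq_zero_of_lt (a := a) (by omega : n < k + 1), qbinom_eq_zero_of_lt hlt]
    ring
  · rw [qbinom_self ha, qbinom_self ha, qbinom_eq_zero_of_lt (Nat.lt_succ_self n)]
    ring
  obtain ⟨d, rfl⟩ : ∃ d, n = k + 1 + d := ⟨n - (k + 1), by omega⟩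
  rw [show k + 1 + d + 1 = (k + 1) + (d + 1) by ring, qbinom_add_left, qbinom_add_left,
    show k + 1 + d = k + (d + 1) by ring, qbinom_add_left, qfact_succ k, qfact_succ d,
    show k + 1 + (d + 1) = k + (d + 1) + 1 by ring, qfact_succ (k + (d + 1)),
    show k + (d + 1) + 1 = (k + 1) + (d + 1) by ring, qint_add]
  have hfact := qfact_ne_zero ha
  field_simp [ha k, ha d]
  ring

end QAnalogues

def qFTerm (a x s : K) (n k : ℕ) : K :=
  a ^ (k * (k + 1) / 2) * qbinom a (n - k) k * s ^ k * x ^ (n - 2 * k)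

section QFibonacci

variable {a : K} (x s : K)

lemma qFTerm_eq_zero {n k : ℕ} (h : n < 2 * k) : qFTerm a x s n k = 0 := by
  rw [qFTerm, qbinom_eq_zero_of_lt (by omega : n - k < k)]
  ring

lemma qF_succ_eq_sum_range {n B : ℕ} (hB : n / 2 < B) :
    qF a x s (n + 1) = ∑ k ∈ range B, qFTerm a x s n k := by
  refine sum_subset (range_subset_range.2 (by omega)) fun k hkB hk => ?_
  rw [mem_range] at hkB hk
  exact qFTerm_eq_zero x s (by omega)

variable (ha : ∀ m, qint a (m + 1) ≠ 0)
include ha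

lemma qFTerm_zero (n : ℕ) : qFTerm a x s n 0 = x ^ n := by
  simp [qFTerm, qbinom_zero_right ha]

lemma qFTerm_succ_succ {n k : ℕ} (hk : 2 * k ≤ n) :
    qFTerm a x s (n + 2) (k + 1)
      = x * qFTerm a x (a * s) (n + 1) (k + 1) + a * s * qFTerm a x (a * s) n k := by
  have htri : (k + 1) * (k + 1 + 1) / 2 = k * (k + 1) / 2 + (k + 1) := by
    rw [show (k + 1) * (k + 1 + 1) = k * (k + 1) + (k + 1) * 2 by ring,
      Nat.add_mul_div_right _ _ two_pos]
  have hx : x * (qbinom a (n - k) (k + 1) * x ^ (n + 1 - 2 * (k + 1)))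
      = qbinom a (n - k) (k + 1) * x ^ (n - 2 * k) := by
    -- at `2 * k = n` the powers of `x` differ, but then the coefficient vanishes
    rcases hk.lt_or_eq with hlt | rfl
    · rw [show n - 2 * k = n + 1 - 2 * (k + 1) + 1 by omega, pow_succ]
      ring
    · rw [qbinom_eq_zero_of_lt (by omega)]
      ring
  simp only [qFTerm, show n + 2 - (k + 1) = n - k + 1 by omega,
    show n + 1 - (k + 1) = n - k by omega, show n + 2 - 2 * (k + 1) = n - 2 * k by omega,
    qbinom_succ_succ ha, htri]
  linear_combination -a ^ (k * (k + 1) / 2) * a ^ (k + 1) * a ^ (k + 1) * s ^ (k + 1) * hx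

theorem qF_add_two (n : ℕ) :
    qF a x s (n + 2) = x * qF a x (a * s) (n + 1) + a * s * qF a x (a * s) n := by
  cases n with
  | zero => simp [qF, qbinom_zero_right ha]
  | succ n =>
    rw [qF_succ_eq_sum_range x s (show (n + 2) / 2 < n / 2 + 2 by omega),
      qF_succ_eq_sum_range x (a * s) (show (n + 1) / 2 < n / 2 + 2 by omega),
      sum_range_succ' (qFTerm a x s _), sum_range_succ' (qFTerm a x (a * s) _),
      qF_succ_eq_sum_range x (a * s) (show n / 2 < n / 2 + 1 by omega), qFTerm_zero x s ha,
      qFTerm_zero x (a * s) ha]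
    rw [sum_congr rfl fun k hk => qFTerm_succ_succ x s ha (by rw [mem_range] at hk; omega),
      sum_add_distrib, ← mul_sum, ← mul_sum]
    ring

end QFibonacci

lemma qint_q_ne_zero (m : ℕ) : qint q (m + 1) ≠ 0 := by
  have hpoly : qint q (m + 1)
      = algebraMap (Polynomial ℚ) K (∑ i ∈ range (m + 1), Polynomial.X ^ i) := by
    simp [qint, q, map_sum, RatFunc.algebraMap_X]
  rw [hpoly]
  refine RatFunc.algebraMap_ne_zero fun h => ?_
  exact Nat.cast_add_one_ne_zero m
    (by simpa [Polynomial.eval_finsetSum] using congrArg (Polynomial.eval 1) h)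

theorem stmt0 (x s : K) (n : ℕ) (hn : 2 ≤ n) :
    qF q x s n = x * qF q x (q * s) (n - 1) + q * s * qF q x (q * s) (n - 2) := by
  obtain ⟨m, rfl⟩ : ∃ m, n = m + 2 := ⟨n - 2, by omega⟩
  exact qF_add_two x s qint_q_ne_zero m
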